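/- Let $\beta = 1 + s$ with $s \in (0,1)$, and let $f \in H^\beta(\mathbb{R}^2)$ have support in $B_R(0)$ with $R \ge 1$. Then, with $K = \overline{B_{2R}(0)}$, the exterior homogeneous norm satisfies $\|f\|_{\dot{H}^\beta(\mathbb{R}^2 \setminus K)} \le C\|f\|_{L^2}\,R^{-1-s}$, for some constant $C > 0$ depending only on $s$. Consequently $\|f\|_{H^\beta(K)} \ge \|f\|_{H^\beta(\mathbb{R}^2)} - C\|f\|_{H^1}R^{-s}$. -/

import Mathlib

open MeasureTheory Real Filter

noncomputable abbrev E2 := EuclideanSpace ℝ (Fin 2)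

/-- The constant `𝒦_s = 4^{s/2} Γ((2+s)/2) / (π |Γ(-s/2)|)`. -/
noncomputable def Kcoef (s : ℝ) : ℝ :=
  4 ^ (s / 2) * Real.Gamma ((2 + s) / 2) / (Real.pi * |Real.Gamma (-(s / 2))|)

/-- The fractional Laplacian `Λ^s f(x) = 𝒦_s P.V. ∫ (f(x)-f(y))/|x-y|^{2+s} dy`
on the plane. -/
noncomputable def fracLap (s : ℝ) (f : E2 → ℝ) (x : E2) : ℝ :=
  Kcoef s * limUnder (nhdsWithin (0:ℝ) (Set.Ioi 0)) (fun ε : ℝ =>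
    ∫ y in {y : E2 | ε < dist x y}, (f x - f y) / dist x y ^ (2 + s))

/-- The `i`-th partial derivative. -/
noncomputable def pd (i : Fin 2) (f : E2 → ℝ) (x : E2) : ℝ :=
  fderiv ℝ f x (EuclideanSpace.single i (1:ℝ))

/-- Squared pointwise magnitude of `Λ^β f = Λ^s ∇f` (componentwise) for
`β = 1+s`. -/
noncomputable def lamGradSq (s : ℝ) (f : E2 → ℝ) (x : E2) : ℝ :=
  (fracLap s (pd 0 f) x) ^ 2 + (fracLap s (pd 1 f) x) ^ 2


lemma psi_eq (s : ℝ) (x : E2) :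
    (fun z : E2 => (dist x z ^ (2+s))⁻¹) = fun z => (‖x - z‖^2) ^ (-(2+s)/2) := by
  funext z
  rw [dist_eq_norm, ← Real.rpow_natCast ‖x - z‖ 2, ← Real.rpow_mul (norm_nonneg _),
    ← Real.rpow_neg (norm_nonneg _)]
  norm_num
  congr 1
  ring

lemma psi_hasFDeriv (s : ℝ) (hs0 : 0 < s) (x : E2) {y : E2} (hxy : y ≠ x) :
    ∃ ℓ : E2 →L[ℝ] ℝ, HasFDerivAt (fun z : E2 => (dist x z ^ (2+s))⁻¹) ℓ y ∧
      ∀ v : E2, |ℓ v| ≤ (2+s) * ‖x - y‖ ^ (-3-s) * ‖v‖ := by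
  have hpos : (0:ℝ) < ‖x - y‖ := by
    rw [norm_sub_pos_iff]; exact fun h => hxy (h.symm)
  set q : ℝ := -(2+s)/2 with hq
  have hN : HasFDerivAt (fun z : E2 => ‖x - z‖^2)
      (2 • (innerSL ℝ (x - y)).comp (-(ContinuousLinearMap.id ℝ E2))) y := by
    have h1 : HasFDerivAt (fun z : E2 => x - z) (-(ContinuousLinearMap.id ℝ E2)) y :=
      (hasFDerivAt_id y).const_sub x
    simpa using h1.norm_sq
  have hR : HasDerivAt (fun t : ℝ => t ^ q) (q * (‖x - y‖^2) ^ (q - 1)) (‖x - y‖^2) :=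
    Real.hasDerivAt_rpow_const (Or.inl (by positivity))
  have hcomp := hR.comp_hasFDerivAt y hN
  rw [psi_eq s x]
  refine ⟨_, hcomp, fun v => ?_⟩
  have hLv : |(2 • (innerSL ℝ (x - y)).comp (-(ContinuousLinearMap.id ℝ E2))) v|
      ≤ 2 * ‖x - y‖ * ‖v‖ := by
    have := abs_real_inner_le_norm (x - y) (-v)
    simp only [ContinuousLinearMap.smul_apply, ContinuousLinearMap.comp_apply,
      ContinuousLinearMap.neg_apply, ContinuousLinearMap.id_apply, innerSL_apply_apply, smul_eq_mul,
      nsmul_eq_mul]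
    rw [abs_mul, norm_neg] at *
    calc |(2:ℝ)| * |inner ℝ (x-y) (-v)| ≤ 2 * (‖x - y‖ * ‖v‖) := by
          rw [abs_two]
          exact mul_le_mul_of_nonneg_left (by simpa using this) (by norm_num)
      _ = 2 * ‖x - y‖ * ‖v‖ := by ring
  calc |((q * (‖x - y‖^2) ^ (q - 1)) • (2 • (innerSL ℝ (x - y)).comp
          (-(ContinuousLinearMap.id ℝ E2)))) v|
      = |q * (‖x - y‖^2) ^ (q - 1)| * |(2 • (innerSL ℝ (x - y)).comp
          (-(ContinuousLinearMap.id ℝ E2))) v| := by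
        simp [abs_mul]
    _ ≤ |q| * (‖x - y‖^2) ^ (q - 1) * (2 * ‖x - y‖ * ‖v‖) := by
        rw [abs_mul, abs_of_nonneg (Real.rpow_nonneg (sq_nonneg _) _)]
        exact mul_le_mul_of_nonneg_left hLv (by positivity)
    _ = (2+s) * ((‖x - y‖^2) ^ (q - 1) * ‖x - y‖) * ‖v‖ := by
        have : |q| = (2+s)/2 := by
          rw [hq, abs_div, abs_neg, abs_of_nonneg (by linarith : (0:ℝ) ≤ 2+s)]
          norm_num
        rw [this]; ring
    _ = (2+s) * ‖x - y‖ ^ (-3-s) * ‖v‖ := by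
        congr 2
        rw [← Real.rpow_natCast ‖x - y‖ 2, ← Real.rpow_mul (norm_nonneg _),
          ← Real.rpow_one ‖x - y‖]
        rw [show (‖x - y‖ ^ (1:ℝ)) ^ ((2:ℕ) * (q-1)) = ‖x-y‖ ^ ((2:ℕ)*(q-1)) by rw [Real.rpow_one],
          ← Real.rpow_add hpos, Real.rpow_one]
        norm_num [hq]; ring_nf

lemma fracLap_bound (s : ℝ) (hs0 : 0 < s) (f : E2 → ℝ) (R : ℝ) (hR : 1 ≤ R)
    (hf : ContDiff ℝ 1 f) (hsupp : Function.support f ⊆ Metric.ball (0 : E2) R)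
    (i : Fin 2) {x : E2} (hx : 2 * R < ‖x‖) :
    |fracLap s (pd i f) x| ≤
      |Kcoef s| * ((2+s) * (2:ℝ) ^ ((3:ℝ)+s) * ‖x‖ ^ (-3-s)) * ∫ y, |f y| := by
  have hR0 : (0:ℝ) < R := by linarith
  have hf0 : ∀ z : E2, R ≤ ‖z‖ → f z = 0 := by
    intro z hz
    by_contra h
    have := hsupp (Function.mem_support.2 h)
    rw [Metric.mem_ball, dist_zero_right] at this
    linarith
  have hg0 : ∀ z : E2, R < ‖z‖ → fderiv ℝ f z = 0 := by
    intro z hz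
    have hev : f =ᶠ[nhds z] (fun _ => (0:ℝ)) := by
      have hopen : IsOpen {w : E2 | R < ‖w‖} := by
        have : {w : E2 | R < ‖w‖} = (Metric.closedBall (0:E2) R)ᶜ := by
          ext w; simp [Metric.mem_closedBall, dist_zero_right, not_le]
        rw [this]; exact Metric.isClosed_closedBall.isOpen_compl
      exact Filter.eventuallyEq_of_mem (hopen.mem_nhds hz) (fun w hw => hf0 w (le_of_lt hw))
    rw [hev.fderiv_eq, fderiv_fun_const]
    rfl
  set v : E2 := EuclideanSpace.single i (1:ℝ) with hv
  have hvnorm : ‖v‖ = 1 := by rw [hv, EuclideanSpace.norm_single]; norm_num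
  set g : E2 → ℝ := pd i f with hgdef
  have hgz : ∀ z : E2, R < ‖z‖ → g z = 0 := by
    intro z hz; rw [hgdef]; unfold pd; rw [hg0 z hz]; rfl
  have hxR : R < ‖x‖ := by linarith
  have hgx : g x = 0 := hgz x hxR
  have hCf : HasCompactSupport f :=
    HasCompactSupport.intro (isCompact_closedBall (0:E2) R) (fun z hz => by
      apply hf0
      rw [Metric.mem_closedBall, dist_zero_right, not_le] at hz
      exact hz.le)
  -- the bump function
  set χ : ContDiffBump (0 : E2) := ⟨R, 3/2 * R, hR0, by linarith⟩ with hχdef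
  have hχ1 : ∀ z : E2, ‖z‖ ≤ R → χ z = 1 := by
    intro z hz
    exact χ.one_of_mem_closedBall (by rwa [Metric.mem_closedBall, dist_zero_right])
  have hχ0 : ∀ z : E2, 3/2 * R < ‖z‖ → χ z = 0 := by
    intro z hz
    by_contra h
    have hz2 : z ∈ Function.support (χ : E2 → ℝ) := Function.mem_support.2 h
    rw [χ.support_eq, Metric.mem_ball, dist_zero_right] at hz2
    have : χ.rOut = 3/2 * R := rfl
    rw [this] at hz2
    linarith
  set ψ : E2 → ℝ := fun z => (dist x z ^ (2+s))⁻¹ with hψdef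
  set φ : E2 → ℝ := fun z => χ z * ψ z with hφdef
  -- smoothness of φ
  have hφsm : ContDiff ℝ 1 φ := by
    rw [contDiff_iff_contDiffAt]
    intro y
    by_cases hy : y = x
    · subst hy
      have hopen : IsOpen {w : E2 | 3/2 * R < ‖w‖} := by
        have : {w : E2 | 3/2 * R < ‖w‖} = (Metric.closedBall (0:E2) (3/2 * R))ᶜ := by
          ext w; simp [Metric.mem_closedBall, dist_zero_right, not_le]
        rw [this]; exact Metric.isClosed_closedBall.isOpen_compl
      have hmem : y ∈ {w : E2 | 3/2 * R < ‖w‖} := by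
        simp only [Set.mem_setOf_eq]; linarith
      have hev : φ =ᶠ[nhds y] (fun _ => (0:ℝ)) :=
        Filter.eventuallyEq_of_mem (hopen.mem_nhds hmem)
          (fun w hw => by simp [hφdef, hχ0 w hw])
      exact (contDiffAt_const (c := (0:ℝ))).congr_of_eventuallyEq hev
    · apply ContDiffAt.mul
      · exact χ.contDiff.contDiffAt
      · rw [hψdef, psi_eq s x]
        have hN : ContDiffAt ℝ 1 (fun z : E2 => ‖x - z‖^2) y :=
          ((contDiff_const.sub contDiff_id).norm_sq ℝ).contDiffAt
        have hNne : ‖x - y‖^2 ≠ 0 := by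
          have : x - y ≠ 0 := sub_ne_zero.2 (fun h => hy h.symm)
          exact pow_ne_zero _ (norm_ne_zero_iff.2 this)
        exact (Real.contDiffAt_rpow_const_of_ne hNne).comp y hN
  have hφc : Continuous φ := hφsm.continuous
  have hdφc : Continuous fun y => fderiv ℝ φ y := hφsm.continuous_fderiv one_ne_zero
  -- integrability
  have hmulCS : ∀ h : E2 → ℝ, HasCompactSupport (fun y => f y * h y) := by
    intro h
    apply HasCompactSupport.intro (isCompact_closedBall (0:E2) R)
    intro z hz
    rw [Metric.mem_closedBall, dist_zero_right, not_le] at hz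
    rw [hf0 z hz.le, zero_mul]
  have hI1 : Integrable (fun y => f y * φ y) :=
    (hf.continuous.mul hφc).integrable_of_hasCompactSupport (hmulCS _)
  have hI2 : Integrable (fun y => fderiv ℝ f y v * φ y) := by
    apply Continuous.integrable_of_hasCompactSupport
    · exact ((hf.continuous_fderiv one_ne_zero).clm_apply continuous_const).mul hφc
    · apply HasCompactSupport.intro (isCompact_closedBall (0:E2) R)
      intro z hz
      rw [Metric.mem_closedBall, dist_zero_right, not_le] at hz
      rw [hg0 z hz]
      simp
  have hI3 : Integrable (fun y => f y * fderiv ℝ φ y v) :=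
    ((hf.continuous.mul (hdφc.clm_apply continuous_const))).integrable_of_hasCompactSupport
      (hmulCS _)
  have hIBP : ∫ y, f y * fderiv ℝ φ y v = -∫ y, fderiv ℝ f y v * φ y :=
    integral_mul_fderiv_eq_neg_fderiv_mul_of_integrable hI2 hI3 hI1
      (fun z _ => hf.differentiable one_ne_zero z) (fun z _ => hφsm.differentiable one_ne_zero z)
  -- evaluation of the principal value
  have hlim : fracLap s g x = Kcoef s * ∫ y, (g x - g y) / dist x y ^ (2+s) := by
    unfold fracLap
    congr 1
    apply Filter.Tendsto.limUnder_eq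
    apply Filter.Tendsto.congr' _ tendsto_const_nhds
    filter_upwards [Ioc_mem_nhdsGT hR0] with ε hε
    symm
    apply setIntegral_eq_integral_of_forall_compl_eq_zero
    intro y hy
    simp only [Set.mem_setOf_eq, not_lt] at hy
    have hyR : R < ‖y‖ := by
      have h1 : ‖x‖ - ‖y‖ ≤ ‖x - y‖ := norm_sub_norm_le x y
      have h2 : ‖x - y‖ ≤ ε := by rwa [dist_eq_norm] at hy
      have h3 : ε ≤ R := hε.2
      linarith
    rw [hgx, hgz y hyR]
    simp
  -- rewrite the integral using IBP
  have hstep : ∫ y, (g x - g y) / dist x y ^ (2+s) = ∫ y, f y * fderiv ℝ φ y v := by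
    rw [hIBP]
    rw [← integral_neg]
    congr 1
    funext y
    by_cases hgy : g y = 0
    · rw [hgx, hgy]
      have : pd i f y = fderiv ℝ f y v := rfl
      rw [show fderiv ℝ f y v = g y from rfl, hgy]
      simp
    · have hyR : ‖y‖ ≤ R := by
        by_contra h
        exact hgy (hgz y (not_le.1 h))
      have hχy : χ y = 1 := hχ1 y hyR
      rw [hgx]
      show (0 - g y) / dist x y ^ (2+s) = -(fderiv ℝ f y v * φ y)
      rw [show fderiv ℝ f y v = g y from rfl, hφdef]
      show (0 - g y) / dist x y ^ (2+s) = -(g y * (χ y * ψ y))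
      rw [hχy, hψdef]
      field_simp
      ring
  -- pointwise bound on f y * fderiv φ y v
  have hxpos : (0:ℝ) < ‖x‖ := by linarith
  set M : ℝ := (2+s) * (2:ℝ) ^ ((3:ℝ)+s) * ‖x‖ ^ (-3-s) with hM
  have hMnn : 0 ≤ M := by
    rw [hM]; positivity
  have hptwise : ∀ y : E2, |f y| * |fderiv ℝ φ y v| ≤ |f y| * M := by
    intro y
    by_cases hfy : f y = 0
    · rw [hfy]; simp
    · have hyR : ‖y‖ < R := by
        have := hsupp (Function.mem_support.2 hfy)
        rwa [Metric.mem_ball, dist_zero_right] at this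
      have hyx : y ≠ x := by
        intro h; rw [h] at hyR; linarith
      obtain ⟨ℓ, hℓ, hℓb⟩ := psi_hasFDeriv s hs0 x hyx
      have hev : φ =ᶠ[nhds y] ψ := by
        apply Filter.eventuallyEq_of_mem (Metric.isOpen_ball.mem_nhds
          (by rwa [Metric.mem_ball, dist_zero_right]))
        intro z hz
        rw [Metric.mem_ball, dist_zero_right] at hz
        simp [hφdef, hχ1 z hz.le]
      have hφℓ : HasFDerivAt φ ℓ y := hℓ.congr_of_eventuallyEq hev
      rw [hφℓ.fderiv]
      have hbd := hℓb v
      rw [hvnorm, mul_one] at hbd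
      have hxy2 : ‖x‖ / 2 ≤ ‖x - y‖ := by
        have h1 : ‖x‖ - ‖y‖ ≤ ‖x - y‖ := norm_sub_norm_le x y
        linarith
      have hb2 : ‖x - y‖ ^ (-3-s) ≤ (‖x‖/2) ^ (-3-s) :=
        Real.rpow_le_rpow_of_nonpos (by linarith) hxy2 (by linarith)
      have hb3 : (‖x‖/2) ^ (-3-s) = (2:ℝ) ^ ((3:ℝ)+s) * ‖x‖ ^ (-3-s) := by
        rw [Real.div_rpow (norm_nonneg x) (by norm_num : (0:ℝ) ≤ 2)]
        rw [show (-3-s : ℝ) = -(3+s) by ring, Real.rpow_neg (by norm_num : (0:ℝ) ≤ 2)]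
        field_simp
      calc |f y| * |ℓ v| ≤ |f y| * ((2+s) * ‖x - y‖ ^ (-3-s)) :=
            mul_le_mul_of_nonneg_left hbd (abs_nonneg _)
        _ ≤ |f y| * ((2+s) * ((2:ℝ) ^ ((3:ℝ)+s) * ‖x‖ ^ (-3-s))) := by
            apply mul_le_mul_of_nonneg_left _ (abs_nonneg _)
            apply mul_le_mul_of_nonneg_left _ (by linarith : (0:ℝ) ≤ 2+s)
            rw [← hb3]
            exact hb2
        _ = |f y| * M := by rw [hM]; ring_nf
  -- integrate the bound
  have hfint : Integrable f := hf.continuous.integrable_of_hasCompactSupport hCf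
  have hfabs : Integrable (fun y => |f y|) := hfint.abs
  have hintabs : |∫ y, f y * fderiv ℝ φ y v| ≤ (∫ y, |f y|) * M := by
    calc |∫ y, f y * fderiv ℝ φ y v| ≤ ∫ y, |f y| * |fderiv ℝ φ y v| := by
          simpa [Real.norm_eq_abs] using
            norm_integral_le_integral_norm (μ := volume) (fun y => f y * fderiv ℝ φ y v)
      _ ≤ ∫ y, |f y| * M := by
          apply integral_mono _ (hfabs.mul_const M) hptwise
          simpa [abs_mul] using hI3.abs
      _ = (∫ y, |f y|) * M := integral_mul_const _ _
  -- conclude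
  rw [hlim, hstep, abs_mul]
  calc |Kcoef s| * |∫ y, f y * fderiv ℝ φ y v| ≤ |Kcoef s| * ((∫ y, |f y|) * M) :=
        mul_le_mul_of_nonneg_left hintabs (abs_nonneg _)
    _ = |Kcoef s| * M * ∫ y, |f y| := by ring

lemma my_sqrt_add (a b : ℝ) (ha : 0 ≤ a) (hb : 0 ≤ b) :
    Real.sqrt (a + b) ≤ Real.sqrt a + Real.sqrt b := by
  have h : a + b ≤ (Real.sqrt a + Real.sqrt b)^2 := by
    nlinarith [Real.sq_sqrt ha, Real.sq_sqrt hb, Real.sqrt_nonneg a, Real.sqrt_nonneg b,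
      mul_nonneg (Real.sqrt_nonneg a) (Real.sqrt_nonneg b)]
  calc Real.sqrt (a+b) ≤ Real.sqrt ((Real.sqrt a + Real.sqrt b)^2) := Real.sqrt_le_sqrt h
    _ = Real.sqrt a + Real.sqrt b := Real.sqrt_sq (by positivity)

lemma l1_le_l2 (f : E2 → ℝ) (R : ℝ) (hR0 : 0 < R) (hcont : Continuous f)
    (hsupp : Function.support f ⊆ Metric.ball (0 : E2) R)
    (hf2 : Integrable (fun x => (f x)^2)) (hfabs : Integrable (fun x => |f x|)) :
    ∫ y, |f y| ≤ R * Real.sqrt ((volume (Metric.ball (0:E2) 1)).toReal) *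
      Real.sqrt (∫ x, (f x)^2) := by
  set V₀ : ℝ := (volume (Metric.ball (0:E2) 1)).toReal with hV₀
  have hV₀nn : 0 ≤ V₀ := ENNReal.toReal_nonneg
  set I : ℝ := ∫ x, (f x)^2 with hI
  have hInn : 0 ≤ I := integral_nonneg (fun x => sq_nonneg _)
  have hf0 : ∀ z : E2, R ≤ ‖z‖ → f z = 0 := by
    intro z hz
    by_contra h
    have := hsupp (Function.mem_support.2 h)
    rw [Metric.mem_ball, dist_zero_right] at this
    linarith
  have hvol : (volume (Metric.ball (0:E2) R)).toReal = R^2 * V₀ := by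
    rw [Measure.addHaar_ball volume (0:E2) hR0.le, finrank_euclideanSpace_fin,
      ENNReal.toReal_mul, ENNReal.toReal_ofReal (by positivity)]
  rcases eq_or_lt_of_le hInn with hI0 | hIpos
  · -- I = 0 : f = 0 a.e.
    have hsq0 : (fun x => (f x)^2) =ᵐ[volume] 0 := by
      have := (integral_eq_zero_iff_of_nonneg (fun x => sq_nonneg (f x)) hf2).1 hI0.symm
      exact this
    have habs0 : (fun x => |f x|) =ᵐ[volume] 0 := by
      filter_upwards [hsq0] with x hx
      simp only [Pi.zero_apply] at hx ⊢
      have : f x = 0 := by nlinarith [sq_nonneg (f x)]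
      simp [this]
    rw [integral_congr_ae habs0]
    simp only [Pi.zero_apply, integral_zero]
    positivity
  · -- main case via AM-GM with t = R √V₀ / √I
    set t : ℝ := R * Real.sqrt V₀ / Real.sqrt I with ht
    by_cases hV0 : V₀ = 0
    ·
      exfalso
      have := Metric.measure_ball_pos volume (0:E2) (by norm_num : (0:ℝ) < 1)
      rw [hV₀] at hV0
      have hlt : volume (Metric.ball (0:E2) 1) < ⊤ := measure_ball_lt_top
      exact (ENNReal.toReal_ne_zero.mpr ⟨this.ne', hlt.ne⟩) hV0
    have hV₀pos : 0 < V₀ := lt_of_le_of_ne hV₀nn (Ne.symm hV0)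
    have htpos : 0 < t := by
      apply div_pos (by positivity) (Real.sqrt_pos.2 hIpos)
    have hball : ∫ y, |f y| = ∫ y in Metric.ball (0:E2) R, |f y| := by
      symm
      apply setIntegral_eq_integral_of_forall_compl_eq_zero
      intro y hy
      rw [Metric.mem_ball, dist_zero_right, not_lt] at hy
      simp [hf0 y hy]
    have hmono : ∫ y in Metric.ball (0:E2) R, |f y| ≤
        ∫ y in Metric.ball (0:E2) R, (t * (f y)^2 + 1/t) / 2 := by
      apply setIntegral_mono_on
      · exact hfabs.integrableOn
      · exact (((hf2.integrableOn).const_mul t).add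
          (integrableOn_const measure_ball_lt_top.ne)).div_const 2
      · exact measurableSet_ball
      · intro y _
        have key : 2*(t*|f y|) ≤ t^2*(f y)^2 + 1 := by
          nlinarith [sq_nonneg (t*|f y| - 1), sq_abs (f y)]
        calc |f y| = (2*(t*|f y|))/(2*t) := by field_simp
          _ ≤ (t^2*(f y)^2 + 1)/(2*t) := by
              apply (div_le_div_iff_of_pos_right (by positivity)).2 key
          _ = (t * (f y)^2 + 1/t) / 2 := by field_simp
    have hsplit : ∫ y in Metric.ball (0:E2) R, (t * (f y)^2 + 1/t) / 2 ≤
        (t * I + (1/t) * (R^2 * V₀)) / 2 := by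
      have h1 : ∫ y in Metric.ball (0:E2) R, (t * (f y)^2 + 1/t) / 2
          = ((t * ∫ y in Metric.ball (0:E2) R, (f y)^2) +
             (1/t) * (volume (Metric.ball (0:E2) R)).toReal) / 2 := by
        rw [integral_div, integral_add ((hf2.integrableOn).const_mul t)
          (integrableOn_const measure_ball_lt_top.ne),
          integral_const_mul, setIntegral_const, smul_eq_mul]
        rw [measureReal_def]
        ring
      rw [h1, hvol]
      have h2 : ∫ y in Metric.ball (0:E2) R, (f y)^2 ≤ I :=
        setIntegral_le_integral hf2 (Filter.Eventually.of_forall (fun x => sq_nonneg _))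
      have := mul_le_mul_of_nonneg_left h2 htpos.le
      linarith
    have hval : (t * I + (1/t) * (R^2 * V₀)) / 2 = R * Real.sqrt V₀ * Real.sqrt I := by
      have hsI : Real.sqrt I > 0 := Real.sqrt_pos.2 hIpos
      have hsV : Real.sqrt V₀ > 0 := Real.sqrt_pos.2 hV₀pos
      have hV' : Real.sqrt V₀ * Real.sqrt V₀ = V₀ := Real.mul_self_sqrt hV₀nn
      have e1 : t * I = R * Real.sqrt V₀ * Real.sqrt I := by
        rw [ht, div_mul_eq_mul_div, mul_div_assoc, Real.div_sqrt]
      have e2 : (1/t) * (R^2 * V₀) = R * Real.sqrt V₀ * Real.sqrt I := by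
        rw [ht, one_div_div, div_mul_eq_mul_div, div_eq_iff (by positivity)]
        linear_combination (-(Real.sqrt I * R^2)) * hV'
      rw [e1, e2]; ring
    calc ∫ y, |f y| = ∫ y in Metric.ball (0:E2) R, |f y| := hball
      _ ≤ ∫ y in Metric.ball (0:E2) R, (t * (f y)^2 + 1/t) / 2 := hmono
      _ ≤ (t * I + (1/t) * (R^2 * V₀)) / 2 := hsplit
      _ = R * Real.sqrt V₀ * Real.sqrt I := hval

noncomputable def Jint (s : ℝ) : ℝ := ∫ x : E2, (1+‖x‖) ^ (-(2+2*s))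

noncomputable def Bconst (s : ℝ) : ℝ :=
  2 * (|Kcoef s| * ((2+s) * (2:ℝ)^((3:ℝ)+s)))^2 *
    ((volume (Metric.ball (0:E2) 1)).toReal) *
    ((2:ℝ)^(-(4:ℝ)) * (3/2:ℝ)^(2+2*s)) * Jint s

lemma exterior_est (s : ℝ) (hs : s ∈ Set.Ioo (0:ℝ) 1) (f : E2 → ℝ) (R : ℝ) (hR : 1 ≤ R)
    (hf : ContDiff ℝ 1 f) (hsupp : Function.support f ⊆ Metric.ball (0 : E2) R)
    (hf2 : Integrable (fun x => (f x)^2)) :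
    ∫ x in (Metric.closedBall (0:E2) (2*R))ᶜ, lamGradSq s f x ≤
      Bconst s * (∫ x, (f x)^2) * R ^ (-(2+2*s)) := by
  obtain ⟨hs0, hs1⟩ := hs
  have hR0 : (0:ℝ) < R := lt_of_lt_of_le one_pos hR
  set V₀ : ℝ := (volume (Metric.ball (0:E2) 1)).toReal with hV₀
  have hV₀nn : 0 ≤ V₀ := ENNReal.toReal_nonneg
  set I : ℝ := ∫ x, (f x)^2 with hI
  have hInn : 0 ≤ I := integral_nonneg (fun x => sq_nonneg _)
  have hf0 : ∀ z : E2, R ≤ ‖z‖ → f z = 0 := by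
    intro z hz
    by_contra h
    have := hsupp (Function.mem_support.2 h)
    rw [Metric.mem_ball, dist_zero_right] at this
    linarith
  have hCf : HasCompactSupport f :=
    HasCompactSupport.intro (isCompact_closedBall (0:E2) R) (fun z hz => by
      apply hf0
      rw [Metric.mem_closedBall, dist_zero_right, not_le] at hz
      exact hz.le)
  have hfint : Integrable f := hf.continuous.integrable_of_hasCompactSupport hCf
  have hfabs : Integrable (fun x => |f x|) := hfint.abs
  set L : ℝ := ∫ y, |f y| with hL
  have hLnn : 0 ≤ L := integral_nonneg (fun x => abs_nonneg _)
  have hLle : L ≤ R * Real.sqrt V₀ * Real.sqrt I :=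
    l1_le_l2 f R hR0 hf.continuous hsupp hf2 hfabs
  have hL2 : L^2 ≤ R^2 * V₀ * I := by
    have h1 : L^2 ≤ (R * Real.sqrt V₀ * Real.sqrt I)^2 := by
      apply pow_le_pow_left₀ hLnn hLle
    calc L^2 ≤ (R * Real.sqrt V₀ * Real.sqrt I)^2 := h1
      _ = R^2 * (Real.sqrt V₀^2) * (Real.sqrt I^2) := by ring
      _ = R^2 * V₀ * I := by rw [Real.sq_sqrt hV₀nn, Real.sq_sqrt hInn]
  set c₁ : ℝ := |Kcoef s| * ((2+s) * (2:ℝ)^((3:ℝ)+s)) with hc₁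
  have hc₁nn : 0 ≤ c₁ := by
    apply mul_nonneg (abs_nonneg _)
    apply mul_nonneg (by linarith) (Real.rpow_nonneg (by norm_num) _)
  have hJnn : 0 ≤ Jint s := integral_nonneg (fun x => Real.rpow_nonneg (by positivity) _)
  -- tail function
  set T : E2 → ℝ := fun x => (R+‖x‖) ^ (-(2+2*s)) with hT
  set W : E2 → ℝ := fun x => (1+‖x‖) ^ (-(2+2*s)) with hW
  have hWint : Integrable W := by
    apply integrable_one_add_norm
    rw [finrank_euclideanSpace_fin]
    push_cast
    linarith
  have hkey : ∀ x : E2, W (R⁻¹ • x) = R^(2+2*s) * T x := by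
    intro x
    rw [hW, hT]
    simp only []
    rw [norm_smul, Real.norm_eq_abs, abs_of_pos (inv_pos.2 hR0)]
    rw [show (1 + R⁻¹ * ‖x‖) = (R + ‖x‖)/R by field_simp]
    rw [Real.div_rpow (by positivity) hR0.le]
    rw [div_eq_mul_inv, Real.rpow_neg hR0.le, inv_inv]
    ring
  have hcomp : Integrable (fun x : E2 => W (R⁻¹ • x)) :=
    hWint.comp_smul (inv_ne_zero (ne_of_gt hR0))
  have hTint : Integrable T := by
    have h2 := hcomp.const_mul ((R:ℝ)^(2+2*s))⁻¹
    refine h2.congr (Filter.Eventually.of_forall fun x => ?_)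
    show (R^(2+2*s))⁻¹ * W (R⁻¹ • x) = T x
    rw [hkey x, ← mul_assoc, inv_mul_cancel₀ (ne_of_gt (Real.rpow_pos_of_pos hR0 _)), one_mul]
  have hTnn : ∀ x, 0 ≤ T x := fun x => Real.rpow_nonneg (by positivity) _
  have hTval : ∫ x, T x = R ^ (-(2+2*s)) * R^2 * Jint s := by
    have h1 : ∫ x : E2, W (R⁻¹ • x) = (R:ℝ) ^ (Module.finrank ℝ E2) • ∫ x, W x :=
      MeasureTheory.Measure.integral_comp_inv_smul_of_nonneg (μ := volume) W hR0.le
    rw [finrank_euclideanSpace_fin] at h1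
    have h2 : ∫ x : E2, W (R⁻¹ • x) = R^(2+2*s) * ∫ x, T x := by
      rw [show (fun x : E2 => W (R⁻¹ • x)) = fun x => R^(2+2*s) * T x from funext hkey]
      exact integral_const_mul _ _
    have h3 : R^(2+2*s) * ∫ x, T x = R^2 * Jint s := by
      rw [← h2, h1, smul_eq_mul, Jint]
    have h4 : (R:ℝ)^(2+2*s) ≠ 0 := ne_of_gt (Real.rpow_pos_of_pos hR0 _)
    have h5 : ∫ x, T x = (R^2 * Jint s) / R^(2+2*s) := by
      rw [eq_div_iff h4]; linear_combination h3
    rw [h5, Real.rpow_neg hR0.le]; ring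
  -- pointwise estimate on the exterior
  set constA : ℝ := 2*(c₁*L)^2 * ((2:ℝ)^(-(4:ℝ)) * R^(-(4:ℝ)) * (3/2:ℝ)^(2+2*s)) with hcA
  have hcAnn : 0 ≤ constA := by positivity
  have hpt : ∀ x ∈ (Metric.closedBall (0:E2) (2*R))ᶜ,
      lamGradSq s f x ≤ constA * T x := by
    intro x hx
    rw [Set.mem_compl_iff, Metric.mem_closedBall, dist_zero_right, not_le] at hx
    have hxpos : (0:ℝ) < ‖x‖ := by linarith
    have h0 := fracLap_bound s hs0 f R hR hf hsupp 0 hx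
    have h1 := fracLap_bound s hs0 f R hR hf hsupp 1 hx
    have hb : ∀ i : Fin 2, (fracLap s (pd i f) x)^2 ≤ (c₁ * L * ‖x‖ ^ (-3-s))^2 := by
      intro i
      have hi := fracLap_bound s hs0 f R hR hf hsupp i hx
      have : |fracLap s (pd i f) x| ≤ c₁ * L * ‖x‖ ^ (-3-s) := by
        calc |fracLap s (pd i f) x| ≤
            |Kcoef s| * ((2+s) * (2:ℝ)^((3:ℝ)+s) * ‖x‖ ^ (-3-s)) * L := hi
          _ = c₁ * L * ‖x‖ ^ (-3-s) := by rw [hc₁]; ring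
      calc (fracLap s (pd i f) x)^2 = |fracLap s (pd i f) x|^2 := (sq_abs _).symm
        _ ≤ (c₁ * L * ‖x‖ ^ (-3-s))^2 := pow_le_pow_left₀ (abs_nonneg _) this 2
    have hsq : (‖x‖ ^ (-3-s))^2 = ‖x‖^(-(4:ℝ)) * ‖x‖^(-(2+2*s)) := by
      rw [sq, ← Real.rpow_add hxpos,
        show (-3-s) + (-3-s) = -(4:ℝ) + -(2+2*s) by ring, Real.rpow_add hxpos]
    have hx4 : ‖x‖^(-(4:ℝ)) ≤ (2*R)^(-(4:ℝ)) :=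
      Real.rpow_le_rpow_of_nonpos (by linarith) hx.le (by norm_num)
    have h2R : (2*R)^(-(4:ℝ)) = (2:ℝ)^(-(4:ℝ)) * R^(-(4:ℝ)) := by
      rw [Real.mul_rpow (by norm_num) hR0.le]
    have hx2s : ‖x‖^(-(2+2*s)) ≤ (3/2:ℝ)^(2+2*s) * T x := by
      have hq1 : (0:ℝ) < (2/3:ℝ) * (R + ‖x‖) := by positivity
      have hq2 : (2/3:ℝ) * (R + ‖x‖) ≤ ‖x‖ := by linarith
      have hq3 : ‖x‖^(-(2+2*s)) ≤ ((2/3:ℝ) * (R + ‖x‖))^(-(2+2*s)) :=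
        Real.rpow_le_rpow_of_nonpos hq1 hq2 (by linarith)
      have hq4 : ((2/3:ℝ) * (R + ‖x‖))^(-(2+2*s)) =
          (3/2:ℝ)^(2+2*s) * T x := by
        rw [Real.mul_rpow (by norm_num) (by positivity), hT]
        simp only []
        congr 1
        rw [show ((2:ℝ)/3) = ((3:ℝ)/2)⁻¹ by norm_num,
          Real.inv_rpow (by norm_num), ← Real.rpow_neg (by norm_num)]
        congr 1
        ring
      rw [← hq4]
      exact hq3
    have hfin : lamGradSq s f x ≤ 2 * (c₁ * L * ‖x‖ ^ (-3-s))^2 := by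
      rw [lamGradSq]
      have := hb 0
      have := hb 1
      linarith [hb 0, hb 1]
    calc lamGradSq s f x ≤ 2 * (c₁ * L * ‖x‖ ^ (-3-s))^2 := hfin
      _ = 2 * (c₁*L)^2 * ((‖x‖ ^ (-3-s))^2) := by ring
      _ = 2 * (c₁*L)^2 * (‖x‖^(-(4:ℝ)) * ‖x‖^(-(2+2*s))) := by rw [hsq]
      _ ≤ 2 * (c₁*L)^2 * (((2:ℝ)^(-(4:ℝ)) * R^(-(4:ℝ))) * ((3/2:ℝ)^(2+2*s) * T x)) := by
          apply mul_le_mul_of_nonneg_left _ (by positivity)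
          apply mul_le_mul _ hx2s (Real.rpow_nonneg (norm_nonneg _) _) (by positivity)
          rw [← h2R]
          exact hx4
      _ = constA * T x := by rw [hcA]; ring
  -- integrate
  have hDDint : IntegrableOn (fun x => constA * T x) (Metric.closedBall (0:E2) (2*R))ᶜ :=
    (hTint.const_mul constA).integrableOn
  have hext : ∫ x in (Metric.closedBall (0:E2) (2*R))ᶜ, lamGradSq s f x ≤
      ∫ x in (Metric.closedBall (0:E2) (2*R))ᶜ, constA * T x := by
    by_cases hInt : IntegrableOn (lamGradSq s f) (Metric.closedBall (0:E2) (2*R))ᶜ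
    · exact setIntegral_mono_on hInt hDDint measurableSet_closedBall.compl hpt
    · rw [integral_undef hInt]
      apply setIntegral_nonneg measurableSet_closedBall.compl
      intro x _
      positivity
  have hfull : ∫ x in (Metric.closedBall (0:E2) (2*R))ᶜ, constA * T x ≤
      constA * ∫ x, T x := by
    rw [← integral_const_mul]
    apply setIntegral_le_integral (hTint.const_mul constA)
    filter_upwards with x
    exact mul_nonneg hcAnn (hTnn x)
  calc ∫ x in (Metric.closedBall (0:E2) (2*R))ᶜ, lamGradSq s f x
      ≤ constA * ∫ x, T x := hext.trans hfull
    _ = (2 * c₁^2 * ((2:ℝ)^(-(4:ℝ)) * (3/2:ℝ)^(2+2*s)) * Jint s * R^(-(2+2*s))) *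
        (L^2 * (R^(-(4:ℝ)) * R^2)) := by rw [hTval, hcA]; ring
    _ ≤ (2 * c₁^2 * ((2:ℝ)^(-(4:ℝ)) * (3/2:ℝ)^(2+2*s)) * Jint s * R^(-(2+2*s))) *
        ((R^2 * V₀ * I) * (R^(-(4:ℝ)) * R^2)) := by
        apply mul_le_mul_of_nonneg_left _ (by positivity)
        apply mul_le_mul_of_nonneg_right hL2 (by positivity)
    _ = Bconst s * I * R ^ (-(2+2*s)) := by
        rw [Bconst, ← hV₀, ← hc₁]
        have hR4 : R^(-(4:ℝ)) * R^2 * R^2 = 1 := by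
          rw [show ((R:ℝ)^(2:ℕ)) = R^((2:ℕ):ℝ) from (Real.rpow_natCast R 2).symm,
            ← Real.rpow_add hR0, ← Real.rpow_add hR0]
          norm_num
        linear_combination ((2 * c₁^2 * ((2:ℝ)^(-(4:ℝ)) * (3/2:ℝ)^(2+2*s)) * Jint s *
          R^(-(2+2*s))) * V₀ * I) * hR4

/-- Exterior smallness of the homogeneous `H^{1+s}` norm of a function
supported in `B_R(0)`, and the resulting lower bound for the `H^β(K)` norm
with `K = closedBall 0 (2R)`. -/
theorem exterior_hbeta_bound (s : ℝ) (hs : s ∈ Set.Ioo (0:ℝ) 1) :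
    ∃ C > (0:ℝ), ∀ (f : E2 → ℝ) (R : ℝ), 1 ≤ R →
      ContDiff ℝ 1 f → Function.support f ⊆ Metric.ball (0 : E2) R →
      Integrable (fun x => (f x) ^ 2) →
      Real.sqrt (∫ x in (Metric.closedBall (0 : E2) (2 * R))ᶜ, lamGradSq s f x) ≤
          C * Real.sqrt (∫ x, (f x) ^ 2) * R ^ (-1 - s) ∧
      (Real.sqrt (∫ x, (f x) ^ 2) + Real.sqrt (∫ x, lamGradSq s f x)) -
          C * (Real.sqrt (∫ x, (f x) ^ 2) +
            Real.sqrt (∫ x, ((pd 0 f x) ^ 2 + (pd 1 f x) ^ 2))) * R ^ (-s) ≤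
        Real.sqrt (∫ x in Metric.closedBall (0 : E2) (2 * R), (f x) ^ 2) +
          Real.sqrt (∫ x in Metric.closedBall (0 : E2) (2 * R), lamGradSq s f x) := by
  obtain ⟨hs0, hs1⟩ := hs
  have hJnn : 0 ≤ Jint s := integral_nonneg (fun x => Real.rpow_nonneg (by positivity) _)
  have hBnn : 0 ≤ Bconst s := by
    rw [Bconst]
    apply mul_nonneg _ hJnn
    apply mul_nonneg _ (by positivity)
    apply mul_nonneg _ ENNReal.toReal_nonneg
    positivity
  set C : ℝ := Real.sqrt (Bconst s) + 1 with hC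
  have hCpos : 0 < C := by positivity
  refine ⟨C, hCpos, ?_⟩
  intro f R hR hf hsupp hf2
  have hR0 : (0:ℝ) < R := lt_of_lt_of_le one_pos hR
  set I : ℝ := ∫ x, (f x)^2 with hI
  have hInn : 0 ≤ I := integral_nonneg (fun x => sq_nonneg _)
  have hext := exterior_est s ⟨hs0, hs1⟩ f R hR hf hsupp hf2
  have hsqrtR : Real.sqrt (R ^ (-(2+2*s))) = R ^ (-1-s) := by
    rw [show (-(2+2*s) : ℝ) = (-1-s) * 2 by ring, Real.rpow_mul hR0.le,
      show ((2:ℝ)) = ((2:ℕ):ℝ) by norm_num, Real.rpow_natCast,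
      Real.sqrt_sq (Real.rpow_nonneg hR0.le _)]
  have part1 : Real.sqrt (∫ x in (Metric.closedBall (0 : E2) (2 * R))ᶜ, lamGradSq s f x) ≤
      C * Real.sqrt I * R ^ (-1-s) := by
    have h1 := Real.sqrt_le_sqrt hext
    have h2 : Real.sqrt (Bconst s * I * R ^ (-(2+2*s))) =
        Real.sqrt (Bconst s) * Real.sqrt I * Real.sqrt (R ^ (-(2+2*s))) := by
      rw [Real.sqrt_mul (mul_nonneg hBnn hInn), Real.sqrt_mul hBnn]
    calc Real.sqrt (∫ x in (Metric.closedBall (0 : E2) (2 * R))ᶜ, lamGradSq s f x)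
        ≤ Real.sqrt (Bconst s * I * R ^ (-(2+2*s))) := h1
      _ = Real.sqrt (Bconst s) * Real.sqrt I * R ^ (-1-s) := by rw [h2, hsqrtR]
      _ ≤ C * Real.sqrt I * R ^ (-1-s) := by
          apply mul_le_mul_of_nonneg_right _ (Real.rpow_nonneg hR0.le _)
          apply mul_le_mul_of_nonneg_right _ (Real.sqrt_nonneg _)
          rw [hC]; linarith
  constructor
  · exact part1
  · -- second inequality
    have hf0 : ∀ z : E2, R ≤ ‖z‖ → f z = 0 := by
      intro z hz
      by_contra h
      have := hsupp (Function.mem_support.2 h)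
      rw [Metric.mem_ball, dist_zero_right] at this
      linarith
    have hKf : ∫ x in Metric.closedBall (0 : E2) (2 * R), (f x)^2 = I := by
      apply setIntegral_eq_integral_of_forall_compl_eq_zero
      intro x hx
      rw [Metric.mem_closedBall, dist_zero_right, not_le] at hx
      rw [hf0 x (by linarith)]
      ring
    have hlamnn : ∀ x, 0 ≤ lamGradSq s f x := by
      intro x
      rw [lamGradSq]
      positivity
    have hKnn : 0 ≤ ∫ x in Metric.closedBall (0 : E2) (2 * R), lamGradSq s f x :=
      setIntegral_nonneg measurableSet_closedBall (fun x _ => hlamnn x)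
    have hKcnn : 0 ≤ ∫ x in (Metric.closedBall (0 : E2) (2 * R))ᶜ, lamGradSq s f x :=
      setIntegral_nonneg measurableSet_closedBall.compl (fun x _ => hlamnn x)
    have hsplit : Real.sqrt (∫ x, lamGradSq s f x) ≤
        Real.sqrt (∫ x in Metric.closedBall (0 : E2) (2 * R), lamGradSq s f x) +
        Real.sqrt (∫ x in (Metric.closedBall (0 : E2) (2 * R))ᶜ, lamGradSq s f x) := by
      by_cases hIg : Integrable (lamGradSq s f)
      · rw [← integral_add_compl measurableSet_closedBall hIg]
        exact my_sqrt_add _ _ hKnn hKcnn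
      · rw [integral_undef hIg, Real.sqrt_zero]
        positivity
    have hRs : R ^ ((-1-s):ℝ) ≤ R ^ (-s:ℝ) :=
      Real.rpow_le_rpow_of_exponent_le hR (by linarith)
    set G : ℝ := Real.sqrt (∫ x, ((pd 0 f x) ^ 2 + (pd 1 f x) ^ 2)) with hG
    have hGnn : 0 ≤ G := Real.sqrt_nonneg _
    rw [hKf]
    have hc1 : C * Real.sqrt I * R ^ (-1-s) ≤ C * Real.sqrt I * R ^ (-s:ℝ) :=
      mul_le_mul_of_nonneg_left hRs (by positivity)
    have hc2 : C * Real.sqrt I * R ^ (-s:ℝ) ≤ C * (Real.sqrt I + G) * R ^ (-s:ℝ) := by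
      apply mul_le_mul_of_nonneg_right _ (Real.rpow_nonneg hR0.le _)
      apply mul_le_mul_of_nonneg_left _ hCpos.le
      linarith
    have h3 := part1.trans (hc1.trans hc2)
    linarith [hsplit, h3]
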